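/- Let k and J be integers with k ≥ 2 and 1 ≤ 2^J ≤ P, and set X_j = 2^{-j}·P. Then for all real β, the sum over 0 ≤ j ≤ J of X_j·(1 + X_j^k·|β|)^{-1/k} is ≪ P·log(2 + P^k·|β|)·(1 + P^k·|β|)^{-1/k}, with implied constant depending only on k. -/

import Mathlib

/-!
Put `c = (1 + P^k|β|)^{-1/k}`. Since `t (1 + t^k|β|)^{-1/k} = (t^{-k} + |β|)^{-1/k}` is increasing
in `t`, the `j`-th term is at most `min (2^{-j} P) (c P)`. If `1 ≤ c 2^n`, the first `n` of these
minima are at most `c P` each and the rest form a geometric series of sum at most `2 c P`; and `n`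
can be taken of size `O(log (2 + P^k|β|))`.
-/

open Finset Real

theorem sum_min_half_pow_le {c : ℝ} (hc : 0 < c) {n : ℕ} (hn : 1 ≤ c * 2 ^ n) (N : ℕ) :
    ∑ j ∈ range N, min ((1 / 2 : ℝ) ^ j) c ≤ c * (n + 2) := by
  induction n generalizing c N with
  | zero =>
    calc ∑ j ∈ range N, min ((1 / 2 : ℝ) ^ j) c
        ≤ ∑ j ∈ range N, (1 / 2 : ℝ) ^ j := sum_le_sum fun j _ => min_le_left _ _
      _ ≤ 2 := sum_geometric_two_le N
      _ ≤ c * ((0 : ℕ) + 2) := by push_cast; rw [pow_zero, mul_one] at hn; linarith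
  | succ n ih =>
    cases N with
    | zero => simp; positivity
    | succ N =>
      -- dropping the term `j = 0` and reindexing turns the tail into the same sum for `2 c`
      have hhalf : ∀ j : ℕ,
          min ((1 / 2 : ℝ) ^ (j + 1)) c = min ((1 / 2 : ℝ) ^ j) (2 * c) / 2 := by
        intro j
        rw [← min_div_div_right zero_le_two]
        congr 1 <;> ring
      have hrest := ih (c := 2 * c) (by positivity) (by rw [pow_succ] at hn; linarith) N
      rw [sum_range_succ', Finset.sum_congr rfl fun j _ => hhalf j, ← sum_div]
      push_cast
      linarith [min_le_right ((1 / 2 : ℝ) ^ 0) c]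

theorem mul_one_add_pow_mul_rpow_le_min {k : ℕ} (hk : k ≠ 0) {b X P : ℝ} (hb : 0 ≤ b)
    (hX : 0 < X) (hXP : X ≤ P) :
    X * (1 + X ^ k * b) ^ (-(1 : ℝ) / k) ≤ min X (P * (1 + P ^ k * b) ^ (-(1 : ℝ) / k)) := by
  have hP : 0 < P := hX.trans_le hXP
  have hexp : -(1 : ℝ) / k ≤ 0 := by rw [neg_div]; exact neg_nonpos.mpr (by positivity)
  refine le_min ?_ ?_
  · exact mul_le_of_le_one_right hX.le (rpow_le_one_of_one_le_of_nonpos (by simp; positivity) hexp)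
  have hscale : (X / P) ^ k * (1 + P ^ k * b) ≤ 1 + X ^ k * b := by
    have hratio : (X / P) ^ k ≤ 1 := pow_le_one₀ (by positivity) ((div_le_one hP).2 hXP)
    calc (X / P) ^ k * (1 + P ^ k * b) = (X / P) ^ k + X ^ k * b := by rw [div_pow]; field_simp
      _ ≤ 1 + X ^ k * b := by gcongr
  have hroot : ((X / P) ^ k) ^ (-(1 : ℝ) / k) = P / X := by
    rw [neg_div, rpow_neg (by positivity), one_div, pow_rpow_inv_natCast (by positivity) hk,
      inv_div]
  calc X * (1 + X ^ k * b) ^ (-(1 : ℝ) / k)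
      ≤ X * ((X / P) ^ k * (1 + P ^ k * b)) ^ (-(1 : ℝ) / k) :=
        mul_le_mul_of_nonneg_left (rpow_le_rpow_of_nonpos (by positivity) hscale hexp) hX.le
    _ = P * (1 + P ^ k * b) ^ (-(1 : ℝ) / k) := by
        rw [mul_rpow (by positivity) (by positivity), hroot]
        field_simp

theorem inv_le_rpow_neg_one_div {k : ℕ} (hk : k ≠ 0) {x : ℝ} (hx : 1 ≤ x) :
    x⁻¹ ≤ x ^ (-(1 : ℝ) / k) := by
  have hexp : -1 ≤ -(1 : ℝ) / k := by
    rw [neg_div, neg_le_neg_iff]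
    exact div_le_one_of_le₀ (by exact_mod_cast Nat.one_le_iff_ne_zero.2 hk) (by positivity)
  rw [← rpow_neg_one]
  exact rpow_le_rpow_of_exponent_le hx hexp

theorem exists_le_two_pow_and_le_log {x : ℝ} (hx : 2 ≤ x) :
    ∃ n : ℕ, x ≤ 2 ^ n ∧ (n : ℝ) + 2 ≤ 6 * log x := by
  have hlogb : 1 ≤ logb 2 x := by
    rw [le_logb_iff_rpow_le one_lt_two (by linarith)]; simpa using hx
  refine ⟨⌈logb 2 x⌉₊, ?_, ?_⟩
  · calc x = 2 ^ logb 2 x := (rpow_logb two_pos (by norm_num) (by linarith)).symm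
      _ ≤ (2 : ℝ) ^ (⌈logb 2 x⌉₊ : ℝ) := rpow_le_rpow_of_exponent_le one_le_two (Nat.le_ceil _)
      _ = 2 ^ ⌈logb 2 x⌉₊ := rpow_natCast 2 _
  · have hceil := Nat.ceil_lt_add_one (by linarith : 0 ≤ logb 2 x)
    have hlog2 : 2 / 3 < log 2 := by linarith [log_two_gt_d9]
    have : logb 2 x ≤ 3 / 2 * log x := by
      rw [logb, div_le_iff₀ (by positivity)]
      nlinarith [log_nonneg (by linarith : (1 : ℝ) ≤ x)]
    linarith

theorem stmt6 (k : ℕ) (hk : 2 ≤ k) :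
    ∃ C : ℝ, 0 < C ∧ ∀ P : ℝ, 0 < P → ∀ J : ℕ, (2 : ℝ) ^ J ≤ P → ∀ β : ℝ,
      ∑ j ∈ Finset.range (J + 1),
        ((2 : ℝ) ^ (-(j : ℝ)) * P) *
          (1 + ((2 : ℝ) ^ (-(j : ℝ)) * P) ^ k * |β|) ^ (-(1 : ℝ) / k)
        ≤ C * P * Real.log (2 + P ^ k * |β|) * (1 + P ^ k * |β|) ^ (-(1 : ℝ) / k) := by
  refine ⟨6, by norm_num, fun P hP J _ β => ?_⟩
  have hk0 : k ≠ 0 := by omega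
  set T := P ^ k * |β|
  set c := (1 + T) ^ (-(1 : ℝ) / k)
  have hT : 0 ≤ T := by positivity
  obtain ⟨n, hTn, hn⟩ := exists_le_two_pow_and_le_log (x := 2 + T) (by linarith)
  have hcn : 1 ≤ c * 2 ^ n :=
    calc (1 : ℝ) ≤ (1 + T)⁻¹ * 2 ^ n := by
          rw [inv_mul_eq_div, one_le_div₀ (by positivity)]; linarith
      _ ≤ c * 2 ^ n := by gcongr; exact inv_le_rpow_neg_one_div hk0 (by linarith)
  have hterm : ∀ j ∈ range (J + 1),
      ((2 : ℝ) ^ (-(j : ℝ)) * P) * (1 + ((2 : ℝ) ^ (-(j : ℝ)) * P) ^ k * |β|) ^ (-(1 : ℝ) / k)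
        ≤ P * min ((1 / 2 : ℝ) ^ j) c := by
    intro j _
    rw [rpow_neg zero_le_two, rpow_natCast, ← one_div, ← one_div_pow, mul_comm _ P,
      mul_min_of_nonneg _ _ hP.le]
    exact mul_one_add_pow_mul_rpow_le_min hk0 (abs_nonneg β) (by positivity)
      (mul_le_of_le_one_right hP.le (pow_le_one₀ (by norm_num) (by norm_num)))
  calc _ ≤ ∑ j ∈ range (J + 1), P * min ((1 / 2 : ℝ) ^ j) c := sum_le_sum hterm
    _ = P * ∑ j ∈ range (J + 1), min ((1 / 2 : ℝ) ^ j) c := (mul_sum _ _ _).symm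
    _ ≤ P * (c * (n + 2)) := by gcongr; exact sum_min_half_pow_le (by positivity) hcn _
    _ ≤ P * (c * (6 * log (2 + T))) := by gcongr
    _ = 6 * P * log (2 + T) * c := by ring
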